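/- arXiv:2604.08264 — 7 statements merged into one kernel-verified Lean document; each statement's English description precedes it below -/
import Mathlib

section
/- Let C = 1/(4e), r_1 > 4e, and define r_2 = 2C r_1² and r_{n+1} = C r_n² ∏_{i=1}^n (1 + r_n/r_i) for n > 2. Then r_{n+1}/r_n > C r_n for all n, and r_{n+j} > 2^j r_n for all j, n ≥ 1. -/
/-! Since every factor of the product is at least 1 and the factor `i = n` equals 2, the
recursion gives `r (n + 1) ≥ 2 C r n ^ 2` for all `n ≥ 1`, which is the first claim with room to
spare. As `C r 1 > 1`, the same inequality gives `r (n + 1) > 2 r n`, so `C r n` stays above 1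
along the sequence and the doubling propagates to `r (n + j) > 2 ^ j r n`. -/

open Finset

theorem Finset.two_le_prod_one_add_div {ι : Type*} {s : Finset ι} {a : ι} (ha : a ∈ s)
    {x : ι → ℝ} (hx : ∀ i ∈ s, 0 < x i) : 2 ≤ ∏ i ∈ s, (1 + x a / x i) := by
  classical
  rw [← mul_prod_erase s _ ha, div_self (hx a ha).ne']
  have hrest : 1 ≤ ∏ i ∈ s.erase a, (1 + x a / x i) :=
    one_le_prod fun i hi =>
      le_add_of_nonneg_right (div_pos (hx a ha) (hx i (mem_of_mem_erase hi))).le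
  linarith

section QuadraticGrowth

variable {C : ℝ} {r : ℕ → ℝ}

theorem two_mul_sq_le_succ_of_rec (hC : 0 ≤ C) (hpos : ∀ n, 1 ≤ n → 0 < r n)
    (hr2 : r 2 = 2 * C * r 1 ^ 2)
    (hrec : ∀ n, 2 ≤ n → r (n + 1) = C * r n ^ 2 * ∏ i ∈ Icc 1 n, (1 + r n / r i))
    (n : ℕ) (hn : 1 ≤ n) : 2 * C * r n ^ 2 ≤ r (n + 1) := by
  rcases hn.eq_or_lt with rfl | hn2
  · exact hr2.ge
  · have hprod : 2 ≤ ∏ i ∈ Icc 1 n, (1 + r n / r i) :=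
      two_le_prod_one_add_div (mem_Icc.2 ⟨hn, le_rfl⟩) fun i hi => hpos i (mem_Icc.1 hi).1
    rw [hrec n hn2]
    calc 2 * C * r n ^ 2 = C * r n ^ 2 * 2 := by ring
      _ ≤ _ := mul_le_mul_of_nonneg_left hprod (by positivity)

variable (hC : 0 < C) (hsq : ∀ n, 1 ≤ n → 2 * C * r n ^ 2 ≤ r (n + 1))
include hC hsq

theorem two_mul_lt_succ_of_one_lt_mul {n : ℕ} (hn : 1 ≤ n) (hCr : 1 < C * r n) :
    2 * r n < r (n + 1) := by
  have hr : 0 < r n := pos_of_mul_pos_right (one_pos.trans hCr) hC.le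
  nlinarith [hsq n hn]

theorem one_lt_mul_of_one_lt_mul_one (h1 : 1 < C * r 1) (n : ℕ) (hn : 1 ≤ n) :
    1 < C * r n := by
  induction n, hn using Nat.le_induction with
  | base => exact h1
  | succ n hn ih =>
    have hr : 0 < r n := pos_of_mul_pos_right (one_pos.trans ih) hC.le
    nlinarith [two_mul_lt_succ_of_one_lt_mul hC hsq hn ih]

end QuadraticGrowth

theorem two_pow_mul_lt_add_of_two_mul_lt {r : ℕ → ℝ} (h : ∀ n, 1 ≤ n → 2 * r n < r (n + 1))
    (j n : ℕ) (hj : 1 ≤ j) (hn : 1 ≤ n) : 2 ^ j * r n < r (n + j) := by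
  induction j, hj using Nat.le_induction with
  | base => simpa using h n hn
  | succ j _ ih =>
    calc 2 ^ (j + 1) * r n = 2 * (2 ^ j * r n) := by ring
      _ < 2 * r (n + j) := by linarith
      _ < r (n + j + 1) := h (n + j) (by omega)

theorem baker_sequence_growth (C : ℝ) (r : ℕ → ℝ)
    (hC : C = 1 / (4 * Real.exp 1))
    (hpos : ∀ n, 1 ≤ n → 0 < r n)
    (hr1 : r 1 > 4 * Real.exp 1)
    (hr2 : r 2 = 2 * C * r 1 ^ 2)
    (hrec : ∀ n, 2 ≤ n → r (n + 1) = C * r n ^ 2 * ∏ i ∈ Finset.Icc 1 n, (1 + r n / r i)) :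
    (∀ n, 1 ≤ n → r (n + 1) / r n > C * r n) ∧
    (∀ j n, 1 ≤ j → 1 ≤ n → r (n + j) > 2 ^ j * r n) := by
  have hCpos : 0 < C := by rw [hC]; positivity
  have hCr1 : 1 < C * r 1 := by
    rw [hC, one_div_mul_eq_div, one_lt_div (by positivity)]
    exact hr1
  have hsq := two_mul_sq_le_succ_of_rec hCpos.le hpos hr2 hrec
  refine ⟨fun n hn => ?_, two_pow_mul_lt_add_of_two_mul_lt fun n hn =>
    two_mul_lt_succ_of_one_lt_mul hCpos hsq hn (one_lt_mul_of_one_lt_mul_one hCpos hsq hCr1 n hn)⟩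
  have hr := hpos n hn
  rw [gt_iff_lt, lt_div_iff₀ hr]
  nlinarith [hsq n hn, mul_pos hCpos (mul_pos hr hr)]
end

section
/- Let (r_n) be the Baker sequence: C = 1/(4e), r_1 > 4e, r_2 = 2C r_1², r_{n+1} = C r_n² ∏_{i=1}^n (1 + r_n/r_i). Then for every fixed natural number m, lim_{n→∞} r_{n+1}/r_n^m = ∞, and consequently lim_{n→∞} (log r_{n+1})/(log r_n) = ∞. -/
/-!
Every factor `1 + r n / r i` of the recursion is at least `1` and at least `r n / r i`, so
`r (n + 1) ≥ C r_n² · r_n^m / (r_1 ⋯ r_m)` whenever `m ≤ n`. For `m = 0` this gives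
`r (n + 1) ≥ C r_n² ≥ (C r_1) r_n` once `r` is known to stay above `r_1`, and `C r_1 > 1`,
so `r_n → ∞` geometrically; for fixed `m` the ratio `r (n + 1) / r_n^m` then dominates a constant
multiple of `r_n²`. Finally `r (n + 1) ≥ r_n^m` gives `log r (n + 1) / log r_n ≥ m`.
-/

open Finset Filter

lemma Real.tendsto_log_div_log_of_tendsto_div_pow {a b : ℕ → ℝ} (ha : ∀ᶠ n in atTop, 1 < a n)
    (h : ∀ m : ℕ, Tendsto (fun n => b n / a n ^ m) atTop atTop) :
    Tendsto (fun n => Real.log (b n) / Real.log (a n)) atTop atTop := by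
  refine tendsto_atTop.2 fun c => ?_
  filter_upwards [(h ⌈c⌉₊).eventually_ge_atTop 1, ha] with n hn han
  have hpow : a n ^ ⌈c⌉₊ ≤ b n := by
    rwa [le_div_iff₀ (by positivity), one_mul] at hn
  have hlog : ⌈c⌉₊ * Real.log (a n) ≤ Real.log (b n) := by
    rw [← Real.log_pow]
    exact Real.log_le_log (by positivity) hpow
  rw [le_div_iff₀ (Real.log_pos han)]
  nlinarith [Nat.le_ceil c, Real.log_pos han]

lemma Finset.pow_div_prod_le_prod_one_add_div {ι : Type*} {s t : Finset ι} {r : ι → ℝ}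
    (hst : s ⊆ t) (hr : ∀ i ∈ t, 0 < r i) {x : ℝ} (hx : 0 ≤ x) :
    x ^ #s / ∏ i ∈ s, r i ≤ ∏ i ∈ t, (1 + x / r i) := by
  have hone : ∀ i ∈ t, 1 ≤ 1 + x / r i := fun i hi =>
    le_add_of_nonneg_right (div_nonneg hx (hr i hi).le)
  calc x ^ #s / ∏ i ∈ s, r i = ∏ i ∈ s, x / r i := by rw [prod_div_distrib, prod_const]
    _ ≤ ∏ i ∈ s, (1 + x / r i) :=
      prod_le_prod (fun i hi => div_nonneg hx (hr i (hst hi)).le) fun _ _ => by linarith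
    _ ≤ ∏ i ∈ t, (1 + x / r i) :=
      prod_le_prod_of_subset_of_one_le hst (fun i hi => (hone i (hst hi)).trans' zero_le_one)
        fun i hi _ => hone i hi

namespace BakerSequence

variable {C : ℝ} {r : ℕ → ℝ}

lemma mul_sq_mul_pow_div_prod_le (hC : 0 ≤ C) (hpos : ∀ n, 1 ≤ n → 0 < r n)
    (hrec : ∀ n, 2 ≤ n → r (n + 1) = C * r n ^ 2 * ∏ i ∈ Icc 1 n, (1 + r n / r i))
    {m n : ℕ} (hn : 2 ≤ n) (hmn : m ≤ n) :
    C * r n ^ 2 * (r n ^ m / ∏ i ∈ Icc 1 m, r i) ≤ r (n + 1) := by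
  have hprod := pow_div_prod_le_prod_one_add_div (Icc_subset_Icc_right hmn)
    (fun i hi => hpos i (mem_Icc.1 hi).1) (hpos n (by omega)).le
  rw [Nat.card_Icc, Nat.add_sub_cancel] at hprod
  rw [hrec n hn]
  gcongr

lemma mul_sq_le_succ (hC : 0 ≤ C) (hpos : ∀ n, 1 ≤ n → 0 < r n)
    (hr2 : r 2 = 2 * C * r 1 ^ 2)
    (hrec : ∀ n, 2 ≤ n → r (n + 1) = C * r n ^ 2 * ∏ i ∈ Icc 1 n, (1 + r n / r i))
    {n : ℕ} (hn : 1 ≤ n) : C * r n ^ 2 ≤ r (n + 1) := by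
  obtain rfl | hn := hn.eq_or_lt
  · rw [hr2]
    nlinarith [hpos 1 le_rfl, sq_nonneg (r 1)]
  · simpa using mul_sq_mul_pow_div_prod_le hC hpos hrec (m := 0) hn (Nat.zero_le n)

lemma mul_le_succ (hC : 0 ≤ C) (hC1 : 1 ≤ C * r 1) (hpos : ∀ n, 1 ≤ n → 0 < r n)
    (hr2 : r 2 = 2 * C * r 1 ^ 2)
    (hrec : ∀ n, 2 ≤ n → r (n + 1) = C * r n ^ 2 * ∏ i ∈ Icc 1 n, (1 + r n / r i))
    {n : ℕ} (hn : 1 ≤ n) : C * r 1 * r n ≤ r (n + 1) := by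
  have hsucc : ∀ k, 1 ≤ k → r 1 ≤ r k → C * r 1 * r k ≤ r (k + 1) := fun k hk h1k =>
    calc C * r 1 * r k ≤ C * r k * r k := by gcongr; exact (hpos k hk).le
      _ = C * r k ^ 2 := by ring
      _ ≤ r (k + 1) := mul_sq_le_succ hC hpos hr2 hrec hk
  refine hsucc n hn ?_
  induction n, hn using Nat.le_induction with
  | base => exact le_rfl
  | succ k hk ih =>
    have := hsucc k hk ih
    nlinarith [hpos k hk]

lemma tendsto_atTop (hC : 0 ≤ C) (hC1 : 1 < C * r 1) (hpos : ∀ n, 1 ≤ n → 0 < r n)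
    (hr2 : r 2 = 2 * C * r 1 ^ 2)
    (hrec : ∀ n, 2 ≤ n → r (n + 1) = C * r n ^ 2 * ∏ i ∈ Icc 1 n, (1 + r n / r i)) :
    Tendsto r atTop atTop :=
  (tendsto_add_atTop_iff_nat 1).1 <| tendsto_atTop_of_geom_le (hpos 1 le_rfl) hC1
    fun n => mul_le_succ hC hC1.le hpos hr2 hrec (Nat.le_add_left 1 n)

lemma tendsto_succ_div_pow (hC : 0 < C) (hC1 : 1 < C * r 1) (hpos : ∀ n, 1 ≤ n → 0 < r n)
    (hr2 : r 2 = 2 * C * r 1 ^ 2)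
    (hrec : ∀ n, 2 ≤ n → r (n + 1) = C * r n ^ 2 * ∏ i ∈ Icc 1 n, (1 + r n / r i)) (m : ℕ) :
    Tendsto (fun n => r (n + 1) / r n ^ m) atTop atTop := by
  have hK : 0 < ∏ i ∈ Icc 1 m, r i := prod_pos fun i hi => hpos i (mem_Icc.1 hi).1
  refine tendsto_atTop_mono' atTop ?_ <|
    ((tendsto_pow_atTop two_ne_zero).comp (tendsto_atTop hC.le hC1 hpos hr2 hrec)).const_mul_atTop
      (div_pos hC hK)
  filter_upwards [eventually_ge_atTop (max 2 m)] with n hn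
  have hrn := hpos n (by omega)
  rw [Function.comp_apply, le_div_iff₀ (by positivity)]
  refine le_trans (le_of_eq ?_) <|
    mul_sq_mul_pow_div_prod_le hC.le hpos hrec (le_of_max_le_left hn) (le_of_max_le_right hn)
  ring

end BakerSequence

theorem baker_sequence_superpolynomial_growth (C : ℝ) (r : ℕ → ℝ)
    (hC : C = 1 / (4 * Real.exp 1))
    (hpos : ∀ n, 1 ≤ n → 0 < r n)
    (hr1 : r 1 > 4 * Real.exp 1)
    (hr2 : r 2 = 2 * C * r 1 ^ 2)
    (hrec : ∀ n, 2 ≤ n → r (n + 1) = C * r n ^ 2 * ∏ i ∈ Finset.Icc 1 n, (1 + r n / r i)) :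
    (∀ m : ℕ, Tendsto (fun n => r (n + 1) / r n ^ m) atTop atTop) ∧
    Tendsto (fun n => Real.log (r (n + 1)) / Real.log (r n)) atTop atTop := by
  have hCpos : 0 < C := by rw [hC]; positivity
  have hC1 : 1 < C * r 1 := by
    rw [hC, one_div_mul_eq_div, one_lt_div (by positivity)]
    exact hr1
  have hratio := BakerSequence.tendsto_succ_div_pow hCpos hC1 hpos hr2 hrec
  have hr := BakerSequence.tendsto_atTop hCpos.le hC1 hpos hr2 hrec
  exact ⟨hratio, Real.tendsto_log_div_log_of_tendsto_div_pow (hr.eventually_gt_atTop 1) hratio⟩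
end

section
/- Let (r_n) be the Baker sequence with C = 1/(4e), r_1 > 4e, r_{n+1} = C r_n² ∏_{i=1}^n (1 + r_n/r_i). Then for all sufficiently large n, r_n² < √(r_{n+1}), i.e. the annulus {z : r_n² < |z| < √(r_{n+1})} is nonempty. -/
/-!
The factor `i = n` of Baker's product is `2`, so `r (n + 1) ≥ 2 C r n ^ 2`; hence once
`2 C r 1 > 1` the sequence increases and `2 C r n > 1` persists. For an increasing sequence every
factor is at least `2` and the factors `i = 1, 2` are at least `r n / r 2`, whence
`r (n + 1) ≥ C 2 ^ (n - 2) r n ^ 4 / r 2 ^ 2`, and `C 2 ^ (n - 2)` eventually exceeds `r 2 ^ 2`.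
-/

open Finset Filter

lemma two_le_prod_one_add_div {r : ℕ → ℝ} {n : ℕ} (hn : 1 ≤ n) (hpos : ∀ i ∈ Icc 1 n, 0 < r i) :
    2 ≤ ∏ i ∈ Icc 1 n, (1 + r n / r i) := by
  have hmem : n ∈ Icc 1 n := mem_Icc.2 ⟨hn, le_rfl⟩
  have hrest : 1 ≤ ∏ i ∈ (Icc 1 n).erase n, (1 + r n / r i) :=
    one_le_prod fun i hi ↦ le_add_of_nonneg_right <|
      div_nonneg (hpos n hmem).le (hpos i (mem_of_mem_erase hi)).le
  rw [← prod_erase_mul _ _ hmem, div_self (hpos n hmem).ne']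
  linarith

lemma sq_div_mul_two_pow_le_prod {r : ℕ → ℝ} {n : ℕ} (hn : 2 ≤ n) (h1 : 0 < r 1)
    (hmono : MonotoneOn r (Set.Ici 1)) :
    (r n / r 2) ^ 2 * 2 ^ (n - 2) ≤ ∏ i ∈ Icc 1 n, (1 + r n / r i) := by
  have hle : ∀ {i j}, 1 ≤ i → i ≤ j → r i ≤ r j := fun hi hij ↦
    hmono (Set.mem_Ici.2 hi) (Set.mem_Ici.2 (hi.trans hij)) hij
  have hpos : ∀ {i}, 1 ≤ i → 0 < r i := fun hi ↦ h1.trans_le (hle le_rfl hi)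
  have hquot : 0 ≤ r n / r 2 := div_nonneg (hpos (by omega)).le (hpos (by omega)).le
  have hfirst : r n / r 2 ≤ 1 + r n / r 1 := by
    have : r n / r 2 ≤ r n / r 1 :=
      div_le_div_of_nonneg_left (hpos (by omega)).le h1 (hle le_rfl (by omega))
    linarith
  have htail : (2 : ℝ) ^ (n - 2) ≤ ∏ i ∈ Icc 3 n, (1 + r n / r i) := by
    calc (2 : ℝ) ^ (n - 2) = ∏ _i ∈ Icc 3 n, (2 : ℝ) := by simp
      _ ≤ ∏ i ∈ Icc 3 n, (1 + r n / r i) := prod_le_prod (fun _ _ ↦ zero_le_two) fun i hi ↦ by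
        obtain ⟨hi3, hin⟩ := mem_Icc.1 hi
        have := (one_le_div (hpos (by omega : 1 ≤ i))).2 (hle (by omega) hin)
        linarith
  rw [← insert_Icc_add_one_left_eq_Icc (by omega : 1 ≤ n),
    ← insert_Icc_add_one_left_eq_Icc (by omega : 1 + 1 ≤ n),
    prod_insert (by simp), prod_insert (by simp)]
  calc (r n / r 2) ^ 2 * 2 ^ (n - 2) = r n / r 2 * (r n / r 2 * 2 ^ (n - 2)) := by ring
    _ ≤ _ := by
      have hsecond : r n / r 2 ≤ 1 + r n / r 2 := by linarith
      exact mul_le_mul hfirst (mul_le_mul hsecond htail (by positivity) (by linarith))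
        (by positivity) (by linarith)

lemma lt_of_two_mul_mul_sq_le {C x y : ℝ} (hC : 0 < C) (hx : 1 < 2 * C * x)
    (hy : 2 * C * x ^ 2 ≤ y) : x < y := by
  have hxpos : 0 < x := pos_of_mul_pos_right (one_pos.trans hx) (by positivity)
  nlinarith

lemma nonempty_annulus {a b : ℝ} (ha : 0 ≤ a) (hab : a < b) :
    {z : ℂ | a < ‖z‖ ∧ ‖z‖ < b}.Nonempty := by
  refine ⟨((a + b) / 2 : ℝ), ?_⟩
  have hnorm : ‖(((a + b) / 2 : ℝ) : ℂ)‖ = (a + b) / 2 := by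
    rw [Complex.norm_real, Real.norm_of_nonneg (by linarith)]
  exact ⟨by linarith, by linarith⟩

structure IsBakerSequence (C : ℝ) (r : ℕ → ℝ) : Prop where
  const_pos : 0 < C
  one_lt_two_mul_mul_one : 1 < 2 * C * r 1
  eq_two : r 2 = 2 * C * r 1 ^ 2
  eq_succ : ∀ n, 2 ≤ n → r (n + 1) = C * r n ^ 2 * ∏ i ∈ Icc 1 n, (1 + r n / r i)

namespace IsBakerSequence

variable {C : ℝ} {r : ℕ → ℝ} {n : ℕ}

lemma two_mul_mul_sq_le (h : IsBakerSequence C r) (hn : 1 ≤ n)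
    (hpos : ∀ i ∈ Icc 1 n, 0 < r i) : 2 * C * r n ^ 2 ≤ r (n + 1) := by
  obtain rfl | hn2 := hn.eq_or_lt
  · exact h.eq_two.ge
  rw [h.eq_succ n hn2]
  have hC := h.const_pos
  calc 2 * C * r n ^ 2 = C * r n ^ 2 * 2 := by ring
    _ ≤ _ := by gcongr; exact two_le_prod_one_add_div hn hpos

lemma one_lt_two_mul_mul (h : IsBakerSequence C r) (hn : 1 ≤ n) : 1 < 2 * C * r n := by
  have hC := h.const_pos
  -- the product in the recursion needs positivity of all earlier terms
  suffices ∀ i ∈ Icc 1 n, 1 < 2 * C * r i from this n (mem_Icc.2 ⟨hn, le_rfl⟩)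
  induction n, hn using Nat.le_induction with
  | base => simpa using h.one_lt_two_mul_mul_one
  | succ n hn ih =>
    have hmem : n ∈ Icc 1 n := mem_Icc.2 ⟨hn, le_rfl⟩
    have hpos : ∀ i ∈ Icc 1 n, 0 < r i := fun i hi ↦
      pos_of_mul_pos_right (one_pos.trans (ih i hi)) (by positivity)
    have hlt : r n < r (n + 1) :=
      lt_of_two_mul_mul_sq_le hC (ih n hmem) (h.two_mul_mul_sq_le hn hpos)
    have hnext : 1 < 2 * C * r (n + 1) := (ih n hmem).trans (by gcongr)
    intro i hi
    obtain hin | rfl := Nat.le_succ_iff.1 (mem_Icc.1 hi).2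
    · exact ih i (mem_Icc.2 ⟨(mem_Icc.1 hi).1, hin⟩)
    · exact hnext

lemma pos (h : IsBakerSequence C r) (hn : 1 ≤ n) : 0 < r n :=
  pos_of_mul_pos_right (one_pos.trans (h.one_lt_two_mul_mul hn)) (by linarith [h.const_pos])

lemma lt_succ (h : IsBakerSequence C r) (hn : 1 ≤ n) : r n < r (n + 1) :=
  lt_of_two_mul_mul_sq_le h.const_pos (h.one_lt_two_mul_mul hn) <|
    h.two_mul_mul_sq_le hn fun _ hi ↦ h.pos (mem_Icc.1 hi).1

lemma strictMonoOn (h : IsBakerSequence C r) : StrictMonoOn r (Set.Ici 1) :=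
  strictMonoOn_of_lt_add_one Set.ordConnected_Ici fun _ _ ha _ ↦ h.lt_succ ha

lemma eventually_pow_four_lt (h : IsBakerSequence C r) : ∀ᶠ n in atTop, r n ^ 4 < r (n + 1) := by
  have hC := h.const_pos
  have hr2 : 0 < r 2 := h.pos (by norm_num)
  have hgrow : Tendsto (fun n : ℕ ↦ C * 2 ^ (n - 2)) atTop atTop :=
    Tendsto.const_mul_atTop hC <|
      (tendsto_pow_atTop_atTop_of_one_lt one_lt_two).comp (tendsto_sub_atTop_nat 2)
  filter_upwards [eventually_ge_atTop 2, hgrow.eventually_gt_atTop (r 2 ^ 2)] with n hn hbig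
  have hrn := h.pos (by omega : 1 ≤ n)
  calc r n ^ 4 = r 2 ^ 2 * (r n / r 2) ^ 2 * r n ^ 2 := by field_simp
    _ < C * 2 ^ (n - 2) * (r n / r 2) ^ 2 * r n ^ 2 := by gcongr
    _ = C * r n ^ 2 * ((r n / r 2) ^ 2 * 2 ^ (n - 2)) := by ring
    _ ≤ C * r n ^ 2 * ∏ i ∈ Icc 1 n, (1 + r n / r i) := by
      gcongr; exact sq_div_mul_two_pow_le_prod hn (h.pos le_rfl) h.strictMonoOn.monotoneOn
    _ = r (n + 1) := (h.eq_succ n hn).symm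

end IsBakerSequence

theorem baker_annuli_nonempty_general (C : ℝ) (r : ℕ → ℝ)
    (hC : C = 1 / (4 * Real.exp 1))
    (hr1 : r 1 > 4 * Real.exp 1)
    (hr2 : r 2 = 2 * C * r 1 ^ 2)
    (hrec : ∀ n, 2 ≤ n → r (n + 1) = C * r n ^ 2 * ∏ i ∈ Finset.Icc 1 n, (1 + r n / r i)) :
    ∀ᶠ n in atTop, r n ^ 2 < Real.sqrt (r (n + 1)) ∧
      {z : ℂ | r n ^ 2 < ‖z‖ ∧ ‖z‖ < Real.sqrt (r (n + 1))}.Nonempty := by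
  have hCpos : 0 < C := by rw [hC]; positivity
  have hstart : 1 < 2 * C * r 1 := by
    rw [hC]
    field_simp
    linarith [Real.exp_pos 1]
  have hbaker : IsBakerSequence C r := ⟨hCpos, hstart, hr2, hrec⟩
  filter_upwards [hbaker.eventually_pow_four_lt] with n hn
  have hsq : r n ^ 2 < Real.sqrt (r (n + 1)) := Real.lt_sqrt_of_sq_lt (by linarith)
  exact ⟨hsq, nonempty_annulus (sq_nonneg _) hsq⟩

theorem baker_annuli_nonempty (C : ℝ) (r : ℕ → ℝ)
    (hC : C = 1 / (4 * Real.exp 1))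
    (hpos : ∀ n, 1 ≤ n → 0 < r n)
    (hr1 : r 1 > 4 * Real.exp 1)
    (hr2 : r 2 = 2 * C * r 1 ^ 2)
    (hrec : ∀ n, 2 ≤ n → r (n + 1) = C * r n ^ 2 * ∏ i ∈ Finset.Icc 1 n, (1 + r n / r i)) :
    ∀ᶠ n in atTop, r n ^ 2 < Real.sqrt (r (n + 1)) ∧
      {z : ℂ | r n ^ 2 < ‖z‖ ∧ ‖z‖ < Real.sqrt (r (n + 1))}.Nonempty :=
  baker_annuli_nonempty_general C r hC hr1 hr2 hrec
end

section
/- Let 0 < C < 1/(4e²), and let (r_n) be an increasing sequence of positive reals with r_{n+1} > 2r_n for all n, and suppose there is n₀ with 2^{n₀-1}C > 2r_1 and r_{n+1} = C² ∏_{i=1}^n (1 + r_n/r_i)² for n > n₀. Then r_{n₀+k+1} > 4^{k+1} r_{n₀+k}² for every natural number k. -/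
/-!
Splitting off the factor `i = 1`, which exceeds `(r n / r 1) ^ 2`, and bounding each of the other
`n - 1` factors below by `4` (as `r i ≤ r n`), gives `r (n + 1) > C ^ 2 * 4 ^ (n - 1) * (r n / r 1) ^ 2`.
With `n = n₀ + k` this beats `4 ^ (k + 1) * r n ^ 2` as soon as `4 * r 1 < 2 ^ n₀ * C`. For `n₀ ≥ 1` this is
the hypothesis on `n₀`; for `n₀ = 0` (where `2 ^ (n₀ - 1) = 1`) the recursion gives `r 2 = 4 * C ^ 2`,
so `r 1 < 2 * C ^ 2 < C / 4` because `C < 1 / 8`.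
-/

open Finset

lemma pow_mul_div_sq_lt_prod_one_add_div_sq {r : ℕ → ℝ} {n : ℕ} (hn : 1 ≤ n)
    (hpos : ∀ i, 1 ≤ i → 0 < r i) (hmono : MonotoneOn r {i | 1 ≤ i}) :
    4 ^ (n - 1) * (r n / r 1) ^ 2 < ∏ i ∈ Icc 1 n, (1 + r n / r i) ^ 2 := by
  have hfirst : (r n / r 1) ^ 2 < (1 + r n / r 1) ^ 2 := by
    have : 0 < r n / r 1 := div_pos (hpos n hn) (hpos 1 le_rfl)
    gcongr
    linarith
  have hrest : (4 : ℝ) ^ (n - 1) ≤ ∏ i ∈ Ioc 1 n, (1 + r n / r i) ^ 2 := by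
    rw [← Nat.card_Ioc 1 n, ← prod_const]
    refine prod_le_prod (fun _ _ ↦ by norm_num) fun i hi ↦ ?_
    obtain ⟨h1i, hin⟩ := mem_Ioc.mp hi
    have : 1 ≤ r n / r i :=
      (one_le_div (hpos i h1i.le)).mpr (hmono h1i.le hn hin)
    nlinarith
  rw [Icc_eq_cons_Ioc hn, prod_cons, mul_comm]
  exact mul_lt_mul hfirst hrest (by positivity) (by positivity)

lemma four_mul_lt_two_pow_mul_of_rec {C : ℝ} {r : ℕ → ℝ} {n₀ : ℕ} (hC0 : 0 < C) (hC : C < 1 / 8)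
    (hr1 : 0 < r 1) (hr2 : 2 * r 1 < r 2) (hn₀ : 2 ^ (n₀ - 1) * C > 2 * r 1)
    (hrec : ∀ n, n₀ < n → r (n + 1) = C ^ 2 * ∏ i ∈ Icc 1 n, (1 + r n / r i) ^ 2) :
    4 * r 1 < 2 ^ n₀ * C := by
  rcases Nat.eq_zero_or_pos n₀ with rfl | hn₀pos
  · have h2 : r 2 = 4 * C ^ 2 := by
      rw [hrec 1 one_pos, Icc_self, prod_singleton, div_self hr1.ne']
      ring
    nlinarith
  · rw [← Nat.sub_add_cancel hn₀pos, pow_succ]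
    linarith

theorem squared_baker_sequence_growth (C : ℝ) (r : ℕ → ℝ) (n₀ : ℕ)
    (hC0 : 0 < C) (hC1 : C < 1 / (4 * Real.exp 1 ^ 2))
    (hpos : ∀ n, 1 ≤ n → 0 < r n)
    (hdouble : ∀ n, 1 ≤ n → r (n + 1) > 2 * r n)
    (hn₀ : 2 ^ (n₀ - 1) * C > 2 * r 1)
    (hrec : ∀ n, n₀ < n → r (n + 1) = C ^ 2 * ∏ i ∈ Finset.Icc 1 n, (1 + r n / r i) ^ 2) :
    ∀ k : ℕ, 1 ≤ k → r (n₀ + k + 1) > 4 ^ (k + 1) * r (n₀ + k) ^ 2 := by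
  intro k hk
  have hC : C < 1 / 8 := by
    have : (2 : ℝ) < Real.exp 1 := by linarith [Real.add_one_lt_exp one_ne_zero]
    calc C < 1 / (4 * Real.exp 1 ^ 2) := hC1
      _ < 1 / 8 := by gcongr; nlinarith
  have hmono : MonotoneOn r {i | 1 ≤ i} :=
    monotoneOn_nat_Ici_of_le_succ fun i hi ↦ by linarith [hdouble i hi, hpos i hi]
  have hr1 := hpos 1 le_rfl
  have hsmall : 16 * r 1 ^ 2 < 4 ^ n₀ * C ^ 2 := by
    have := four_mul_lt_two_pow_mul_of_rec hC0 hC hr1 (hdouble 1 le_rfl) hn₀ hrec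
    rw [show (4 : ℝ) ^ n₀ = (2 ^ n₀) ^ 2 by rw [← pow_mul, mul_comm, pow_mul]; norm_num]
    nlinarith
  obtain ⟨j, rfl⟩ : ∃ j, k = j + 1 := ⟨k - 1, by omega⟩
  set n := n₀ + (j + 1)
  have hn : n - 1 = n₀ + j := by omega
  rw [hrec n (by omega), gt_iff_lt]
  calc 4 ^ (j + 1 + 1) * r n ^ 2 = 16 * r 1 ^ 2 * 4 ^ j * (r n / r 1) ^ 2 := by
        field_simp
        ring
    _ ≤ 4 ^ n₀ * C ^ 2 * 4 ^ j * (r n / r 1) ^ 2 := by gcongr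
    _ = C ^ 2 * (4 ^ (n - 1) * (r n / r 1) ^ 2) := by rw [hn, pow_add]; ring
    _ < C ^ 2 * ∏ i ∈ Icc 1 n, (1 + r n / r i) ^ 2 :=
        mul_lt_mul_of_pos_left (pow_mul_div_sq_lt_prod_one_add_div_sq (by omega) hpos hmono)
          (by positivity)
end

section
/- Let (r_n) be positive reals with r_{n+1} > 2^{n+1} r_n for all large n, and set s_n = ((n+1)/(n+2)) r_{n+1}. Define φ(z) = ∑_{i=1}^∞ 1/(z + r_i). Then for all sufficiently large n, φ(-s_n) > 0. -/
/-!
Write `d = r (n+1) / (n+2)`, so that `s n = (n+1) d` and `r (n+1) = (n+2) d`. Fast growth makes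
`r 1, …, r n` all at most `d`, so each of the `n` terms `1 / (r (i+1) - s n)` with `i < n` is at
least `-1 / (n d)`, while the term with `i = n` is exactly `1 / d`: together they are nonnegative.
All later terms are positive because `r` is eventually increasing.
-/

open Filter Finset

section GeometricGrowth

variable {u : ℕ → ℝ} (hu : ∀ᶠ n in atTop, 0 < u n ∧ 2 * u n ≤ u (n + 1))
include hu

theorem tendsto_atTop_of_eventually_two_mul_le : Tendsto u atTop atTop := by
  obtain ⟨N, hN⟩ := eventually_atTop.1 hu
  refine (tendsto_add_atTop_iff_nat N).1 (tendsto_atTop_of_geom_le (by simpa using (hN N le_rfl).1) one_lt_two ?_)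
  intro n
  rw [show n + 1 + N = n + N + 1 by omega]
  exact (hN (n + N) (by omega)).2

theorem summable_one_div_add_of_eventually_two_mul_le (x : ℝ) :
    Summable fun n => 1 / (x + u n) := by
  have hinv : Summable fun n => 2 * (u n)⁻¹ := by
    refine (summable_of_ratio_norm_eventually_le (f := fun n => (u n)⁻¹) (r := 1 / 2) (by norm_num) ?_).mul_left 2
    filter_upwards [hu] with n ⟨hpos, hle⟩
    rw [Real.norm_of_nonneg (inv_nonneg.2 (by linarith)), Real.norm_of_nonneg (inv_nonneg.2 hpos.le)]
    calc (u (n + 1))⁻¹ ≤ (2 * u n)⁻¹ := inv_anti₀ (by positivity) hle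
      _ = 1 / 2 * (u n)⁻¹ := by ring
  refine .of_norm_bounded_eventually_nat hinv ?_
  filter_upwards [(tendsto_atTop_of_eventually_two_mul_le hu).eventually_gt_atTop (2 * |x|)]
    with n hn
  have hx : u n / 2 ≤ x + u n := by linarith [neg_abs_le x]
  have hpos : 0 < u n / 2 := by linarith [abs_nonneg x]
  calc ‖1 / (x + u n)‖ = 1 / (x + u n) := Real.norm_of_nonneg (one_div_nonneg.2 (by linarith))
    _ ≤ 1 / (u n / 2) := one_div_le_one_div_of_le hpos hx
    _ = 2 * (u n)⁻¹ := by ring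

end GeometricGrowth

theorem eventually_forall_le_of_monotoneOn {α : Type*} [LinearOrder α] {f g : ℕ → α} {N : ℕ}
    (hf : MonotoneOn f (Set.Ici N)) (hfg : ∀ᶠ n in atTop, f n ≤ g n)
    (hg : Tendsto g atTop atTop) : ∀ᶠ n in atTop, ∀ i ≤ n, f i ≤ g n := by
  filter_upwards [hfg, eventually_ge_atTop N,
    hg.eventually_ge_atTop ((range (N + 1)).sup' nonempty_range_add_one f)] with n hfgn hNn hM i hi
  rcases le_total i N with hiN | hNi
  · exact (le_sup' f (mem_range.2 (by omega))).trans hM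
  · exact (hf hNi hNn hi).trans hfgn

theorem sum_range_succ_one_div_sub_nonneg {a : ℕ → ℝ} {n : ℕ} {d : ℝ} (hd : 0 < d)
    (ha : ∀ i < n, a i ≤ d) (han : a n = (n + 2) * d) :
    0 ≤ ∑ i ∈ range (n + 1), 1 / (a i - (n + 1) * d) := by
  have hlow : ∀ i ∈ range n, -(1 / (n * d)) ≤ 1 / (a i - (n + 1) * d) := by
    intro i hi
    have hn : (0 : ℝ) < n := Nat.cast_pos.2 (by have := mem_range.1 hi; omega)
    rw [← one_div_neg_eq_neg_one_div]
    exact one_div_le_one_div_of_neg_of_le (by nlinarith) (by linarith [ha i (mem_range.1 hi)])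
  have hsum := sum_le_sum hlow
  rw [sum_const, card_range, nsmul_eq_mul] at hsum
  have hlast : 1 / (a n - (n + 1) * d) = 1 / d := by rw [han]; ring_nf
  have hcancel : (n : ℝ) * (1 / (n * d)) ≤ 1 / d := by
    rcases n.eq_zero_or_pos with rfl | hn
    · simp [hd.le]
    · rw [mul_one_div, div_mul_cancel_left₀ (by positivity), one_div]
  rw [sum_range_succ, hlast]
  linarith

theorem tsum_one_div_sub_pos {a : ℕ → ℝ} {n : ℕ} {d : ℝ} (hd : 0 < d)
    (ha : ∀ i < n, a i ≤ d) (han : a n = (n + 2) * d) (ha' : ∀ i > n, (n + 2) * d ≤ a i)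
    (hsum : Summable fun i => 1 / (a i - (n + 1) * d)) :
    0 < ∑' i, 1 / (a i - (n + 1) * d) := by
  have htail : ∀ i, 0 < 1 / (a (i + (n + 1)) - (n + 1) * d) := fun i => by
    have := ha' (i + (n + 1)) (by omega)
    exact one_div_pos.2 (by linarith)
  rw [← hsum.sum_add_tsum_nat_add (n + 1)]
  exact add_pos_of_nonneg_of_pos (sum_range_succ_one_div_sub_nonneg hd ha han)
    (((summable_nat_add_iff (n + 1)).2 hsum).tsum_pos (fun i => (htail i).le) 0 (htail 0))

theorem phi_pos_at_neg_sn (r : ℕ → ℝ) (s : ℕ → ℝ) (φ : ℝ → ℝ)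
    (hpos : ∀ n, 1 ≤ n → 0 < r n)
    (hgrow : ∀ᶠ n in atTop, r (n + 1) > 2 ^ (n + 1) * r n)
    (hs : ∀ n : ℕ, s n = ((n + 1 : ℝ) / (n + 2)) * r (n + 1))
    (hφ : ∀ x : ℝ, φ x = ∑' i : ℕ, 1 / (x + r (i + 1))) :
    ∀ᶠ n in atTop, φ (-(s n)) > 0 := by
  have hr : ∀ᶠ n in atTop, 0 < r n ∧ (n + 2) * r n ≤ r (n + 1) := by
    filter_upwards [hgrow, eventually_ge_atTop 1] with n hgrow hn
    have h2pow : (n : ℝ) + 2 ≤ 2 ^ (n + 1) := by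
      exact_mod_cast (Nat.lt_two_pow_self : n + 2 ≤ 2 ^ (n + 1))
    exact ⟨hpos n hn, by nlinarith [hpos n hn]⟩
  have hr2 : ∀ᶠ n in atTop, 0 < r n ∧ 2 * r n ≤ r (n + 1) :=
    hr.mono fun n ⟨hrn, hle⟩ => ⟨hrn, by nlinarith [n.cast_nonneg (α := ℝ)]⟩
  obtain ⟨N, hN⟩ := eventually_atTop.1 hr2
  have hmono : MonotoneOn r (Set.Ici N) :=
    monotoneOn_nat_Ici_of_le_succ fun n hn => by linarith [hN n hn]
  have hle : ∀ᶠ n in atTop, r n ≤ r (n + 1) / (n + 2) :=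
    hr.mono fun n h => (le_div_iff₀ (by positivity)).2 (by linarith [h.2])
  have hsmall := eventually_forall_le_of_monotoneOn hmono hle
    (tendsto_atTop_mono' atTop hle (tendsto_atTop_of_eventually_two_mul_le hr2))
  filter_upwards [hsmall, eventually_ge_atTop N] with n hsmall hn
  have hrn : 0 < r (n + 1) := (hN (n + 1) (by omega)).1
  have hterm : ∀ i, -(s n) + r (i + 1) = r (i + 1) - (n + 1) * (r (n + 1) / (n + 2)) := by
    intro i; rw [hs]; ring
  have hsum := (summable_nat_add_iff 1).2
    (summable_one_div_add_of_eventually_two_mul_le hr2 (-(s n)))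
  rw [hφ, gt_iff_lt]
  simp only [hterm] at hsum ⊢
  refine tsum_one_div_sub_pos (by positivity) (fun i hi => hsmall (i + 1) hi) (by field_simp)
    (fun i hi => ?_) hsum
  rw [mul_div_cancel₀ _ (by positivity)]
  exact hmono (Set.mem_Ici.2 (by omega)) (Set.mem_Ici.2 (by omega)) (by omega)
end

section
/- Let (r_k) be positive reals with r_{k+1} ≥ C r_k² for a constant C > 0 and r_k → ∞, and let z lie in the annulus r_n² < |z| < √(r_{n+1}). Then ∑_{k=1}^∞ 1/|z - r_k| ≤ 2n/r_n² + 2/r_{n+1} + 2/(C r_{n+1}²) for all sufficiently large n; in particular ∑_{k=1}^∞ 1/(z - r_k) → 0 as z → ∞ through the annuli. -/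
/-! For `z` in the annulus `r n ^ 2 < ‖z‖ < √(r (n + 1))` the poles fall into three groups.
The poles `r 1, …, r n` are at most `r n ≤ ‖z‖ / 2`, so each contributes at most
`2 / ‖z‖ < 2 / r n ^ 2`. The pole `r (n + 1)` is at least `4 ‖z‖`, so it contributes at most
`2 / r (n + 1)`. Since `C * r k → ∞`, the relation `r (k + 1) ≥ C * r k ^ 2` eventually gives
`r (k + 1) ≥ 4 * r k`, so the remaining poles grow geometrically from `r (n + 2) ≥ 4 ‖z‖` and
contribute at most `2 / r (n + 2) ≤ 2 / (C * r (n + 1) ^ 2)`. The bound tends to `0` because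
`r n ≥ 2 ^ (n - 1) * r 1` makes `n / r n → 0`. -/

open Filter Topology Finset

section NormedGroup

variable {E : Type*} [SeminormedAddCommGroup E]

lemma one_div_norm_sub_le_one_div_sub {v w : E} (h : ‖v‖ < ‖w‖) :
    1 / ‖v - w‖ ≤ 1 / (‖w‖ - ‖v‖) :=
  one_div_le_one_div_of_le (sub_pos.2 h) (norm_sub_rev v w ▸ norm_sub_norm_le w v)

lemma one_div_norm_sub_le_two_div {v w : E} (hw : 0 < ‖w‖) (h : 2 * ‖v‖ ≤ ‖w‖) :
    1 / ‖v - w‖ ≤ 2 / ‖w‖ :=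
  calc 1 / ‖v - w‖ ≤ 1 / (‖w‖ - ‖v‖) := one_div_norm_sub_le_one_div_sub (by linarith)
    _ ≤ 1 / (‖w‖ / 2) := one_div_le_one_div_of_le (by positivity) (by linarith)
    _ = 2 / ‖w‖ := one_div_div _ _

lemma summable_one_div_norm_sub_and_tsum_le {v : E} {w : ℕ → E} {a : ℝ} (ha : 0 < a)
    (hw : ∀ j, 4 ^ j * a ≤ ‖w j‖) (hv : 4 * ‖v‖ ≤ a) :
    Summable (fun j ↦ 1 / ‖v - w j‖) ∧ ∑' j, 1 / ‖v - w j‖ ≤ 2 / a := by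
  have hterm : ∀ j, 1 / ‖v - w j‖ ≤ 4 / (3 * a) * (1 / 4) ^ j := fun j ↦ by
    have h4j : (1 : ℝ) ≤ 4 ^ j := one_le_pow₀ (by norm_num)
    calc 1 / ‖v - w j‖ ≤ 1 / (‖w j‖ - ‖v‖) :=
          one_div_norm_sub_le_one_div_sub (by nlinarith [hw j, norm_nonneg v])
      _ ≤ 1 / (3 / 4 * (4 ^ j * a)) :=
          one_div_le_one_div_of_le (by positivity) (by nlinarith [hw j])
      _ = 4 / (3 * a) * (1 / 4) ^ j := by rw [one_div_pow]; field_simp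
  have hgeom : Summable (fun j : ℕ ↦ 4 / (3 * a) * (1 / 4 : ℝ) ^ j) :=
    (summable_geometric_of_lt_one (by norm_num) (by norm_num)).mul_left _
  have hsum : Summable (fun j ↦ 1 / ‖v - w j‖) :=
    hgeom.of_nonneg_of_le (fun _ ↦ by positivity) hterm
  refine ⟨hsum, (hsum.tsum_le_tsum hterm hgeom).trans ?_⟩
  rw [tsum_mul_left, tsum_geometric_of_lt_one (by norm_num) (by norm_num)]
  field_simp
  norm_num

end NormedGroup

lemma pow_mul_le_of_forall_mul_le {r : ℕ → ℝ} {q : ℝ} {m : ℕ} (hq : 0 ≤ q)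
    (h : ∀ k, m ≤ k → q * r k ≤ r (k + 1)) (j : ℕ) : q ^ j * r m ≤ r (m + j) := by
  induction j with
  | zero => simp
  | succ j ih =>
    calc q ^ (j + 1) * r m = q * (q ^ j * r m) := by ring
      _ ≤ q * r (m + j) := mul_le_mul_of_nonneg_left ih hq
      _ ≤ r (m + j + 1) := h _ (by omega)

lemma four_mul_sqrt_le_self {x : ℝ} (hx : 16 ≤ x) : 4 * √x ≤ x := by
  have h4 : 4 ≤ √x := Real.le_sqrt_of_sq_le (by linarith)
  calc 4 * √x ≤ √x * √x := by gcongr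
    _ = x := Real.mul_self_sqrt (by linarith)

lemma tendsto_natCast_div_of_two_pow_mul_le {r : ℕ → ℝ} {c : ℝ} (hc : 0 < c)
    (h : ∀ᶠ n in atTop, c * 2 ^ n ≤ r n) : Tendsto (fun n : ℕ ↦ (n : ℝ) / r n) atTop (𝓝 0) := by
  have hlim : Tendsto (fun n : ℕ ↦ c⁻¹ * ((n : ℝ) ^ 1 / 2 ^ n)) atTop (𝓝 0) := by
    simpa using (tendsto_pow_const_div_const_pow_of_one_lt 1 one_lt_two).const_mul c⁻¹
  refine squeeze_zero' (h.mono fun n hn ↦ ?_) (h.mono fun n hn ↦ ?_) hlim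
  · have : 0 < r n := lt_of_lt_of_le (by positivity) hn
    positivity
  · calc (n : ℝ) / r n ≤ n / (c * 2 ^ n) := by gcongr
      _ = c⁻¹ * ((n : ℝ) ^ 1 / 2 ^ n) := by ring

lemma pole_sum_summable_and_le {r : ℕ → ℝ} {n : ℕ} {z : ℂ} (hpos : ∀ k, 1 ≤ k → 0 < r k)
    (hmono : MonotoneOn r {k | 1 ≤ k}) (hrn : 2 ≤ r n)
    (hratio : ∀ j, 4 ^ j * r (n + 2) ≤ r (n + 2 + j))
    (hz_inner : r n ^ 2 < ‖z‖) (hz_outer : 4 * ‖z‖ ≤ r (n + 1)) :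
    Summable (fun k ↦ 1 / ‖z - (r (k + 1) : ℂ)‖) ∧
      ∑' k, 1 / ‖z - (r (k + 1) : ℂ)‖ ≤ 2 * n / r n ^ 2 + 2 / r (n + 1) + 2 / r (n + 2) := by
  have hnorm : ∀ k, ‖(r (k + 1) : ℂ)‖ = r (k + 1) := fun k ↦
    Complex.norm_of_nonneg (hpos _ (by omega)).le
  have hz_pos : 0 < ‖z‖ := (sq_nonneg (r n)).trans_lt hz_inner
  have hr12 : r (n + 1) ≤ r (n + 2) := hmono (by simp) (by simp) (by omega)
  obtain ⟨htail_sum, htail⟩ := summable_one_div_norm_sub_and_tsum_le (v := z)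
    (w := fun j ↦ (r (j + (n + 1) + 1) : ℂ)) (by linarith)
    (fun j ↦ by rw [hnorm, show j + (n + 1) + 1 = n + 2 + j by omega]; exact hratio j)
    (hz_outer.trans hr12)
  have hsum : Summable (fun k ↦ 1 / ‖z - (r (k + 1) : ℂ)‖) :=
    (summable_nat_add_iff (n + 1)).1 htail_sum
  have hinner : ∀ k ∈ range n, 1 / ‖z - (r (k + 1) : ℂ)‖ ≤ 2 / r n ^ 2 := fun k hk ↦ by
    have hk : r (k + 1) ≤ r n := hmono (by simp) (by simp at hk ⊢; omega) (by simp at hk; omega)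
    rw [norm_sub_rev]
    calc 1 / ‖(r (k + 1) : ℂ) - z‖ ≤ 2 / ‖z‖ :=
          one_div_norm_sub_le_two_div hz_pos (by rw [hnorm]; nlinarith)
      _ ≤ 2 / r n ^ 2 := by gcongr
  have hnext : 1 / ‖z - (r (n + 1) : ℂ)‖ ≤ 2 / r (n + 1) := by
    simpa only [hnorm] using
      one_div_norm_sub_le_two_div (v := z) (w := (r (n + 1) : ℂ))
        (by rw [hnorm]; linarith) (by rw [hnorm]; linarith)
  refine ⟨hsum, ?_⟩
  rw [← hsum.sum_add_tsum_nat_add (n + 1), sum_range_succ]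
  have hfirst := sum_le_card_nsmul _ _ _ hinner
  rw [card_range, nsmul_eq_mul] at hfirst
  have : (n : ℝ) * (2 / r n ^ 2) = 2 * n / r n ^ 2 := by ring
  linarith

lemma tendsto_pole_bound {C : ℝ} {r : ℕ → ℝ} (htend : Tendsto r atTop atTop)
    (hlin : Tendsto (fun n : ℕ ↦ (n : ℝ) / r n) atTop (𝓝 0)) :
    Tendsto (fun n : ℕ ↦ 2 * n / r n ^ 2 + 2 / r (n + 1) + 2 / (C * r (n + 1) ^ 2))
      atTop (𝓝 0) := by
  have hinv := htend.inv_tendsto_atTop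
  have hinv' := hinv.comp (tendsto_add_atTop_nat 1)
  have h := (((hlin.mul hinv).const_mul 2).add (hinv'.const_mul 2)).add
    ((hinv'.pow 2).const_mul (2 / C))
  simp only [mul_zero, add_zero, ne_eq, OfNat.ofNat_ne_zero, not_false_eq_true, zero_pow] at h
  convert h using 2 with n
  simp only [Function.comp_apply, Pi.inv_apply]
  ring

theorem pole_sum_estimate (C : ℝ) (r : ℕ → ℝ)
    (hCpos : 0 < C)
    (hpos : ∀ k, 1 ≤ k → 0 < r k)
    (hquad : ∀ k, 1 ≤ k → r (k + 1) ≥ C * r k ^ 2)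
    (htend : Tendsto r atTop atTop)
    (hgrow : ∀ j n, 1 ≤ j → 1 ≤ n → r (n + j) > 2 ^ j * r n) :
    (∀ᶠ n in atTop, ∀ z : ℂ,
      r n ^ 2 < ‖z‖ → ‖z‖ < Real.sqrt (r (n + 1)) →
      (∑' k : ℕ, 1 / ‖z - (r (k + 1) : ℂ)‖)
        ≤ 2 * n / r n ^ 2 + 2 / r (n + 1) + 2 / (C * r (n + 1) ^ 2)) ∧
    (∀ ε : ℝ, 0 < ε → ∃ N : ℕ, ∀ n, N ≤ n → ∀ z : ℂ,
      r n ^ 2 < ‖z‖ → ‖z‖ < Real.sqrt (r (n + 1)) →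
      ‖∑' k : ℕ, 1 / (z - (r (k + 1) : ℂ))‖ < ε) := by
  have hmono : MonotoneOn r {k | 1 ≤ k} := monotoneOn_nat_Ici_of_le_succ fun k hk ↦ by
    linarith [hgrow 1 k le_rfl hk, hpos k hk]
  have hratio : ∀ᶠ m in atTop, ∀ j, 4 ^ j * r m ≤ r (m + j) := by
    have hstep : ∀ᶠ k in atTop, 4 * r k ≤ r (k + 1) := by
      filter_upwards [eventually_ge_atTop 1, (htend.const_mul_atTop hCpos).eventually_ge_atTop 4]
        with k hk hCk
      nlinarith [hquad k hk, hpos k hk]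
    filter_upwards [eventually_forall_ge_atTop.2 hstep] with m hm
    exact pow_mul_le_of_forall_mul_le (by norm_num) hm
  have hbound : ∀ᶠ n in atTop, ∀ z : ℂ, r n ^ 2 < ‖z‖ → ‖z‖ < √(r (n + 1)) →
      Summable (fun k ↦ 1 / ‖z - (r (k + 1) : ℂ)‖) ∧ ∑' k, 1 / ‖z - (r (k + 1) : ℂ)‖ ≤
        2 * n / r n ^ 2 + 2 / r (n + 1) + 2 / (C * r (n + 1) ^ 2) := by
    filter_upwards [htend.eventually_ge_atTop 2,
      (htend.comp (tendsto_add_atTop_nat 1)).eventually_ge_atTop 16,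
      (tendsto_add_atTop_nat 2).eventually hratio] with n hrn hrn1 hrn2 z hz_inner hz_outer
    obtain ⟨hsum, hle⟩ := pole_sum_summable_and_le hpos hmono hrn hrn2 hz_inner
      (by linarith [four_mul_sqrt_le_self (x := r (n + 1)) hrn1])
    refine ⟨hsum, hle.trans ?_⟩
    have := hquad (n + 1) (by omega)
    gcongr
  refine ⟨hbound.mono fun n h z hz_inner hz_outer ↦ (h z hz_inner hz_outer).2, fun ε hε ↦ ?_⟩
  have hlin : Tendsto (fun n : ℕ ↦ (n : ℝ) / r n) atTop (𝓝 0) := by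
    refine tendsto_natCast_div_of_two_pow_mul_le (c := r 1 / 2) (by linarith [hpos 1 le_rfl]) ?_
    filter_upwards [eventually_ge_atTop 2] with n hn
    obtain ⟨j, rfl⟩ : ∃ j, n = 1 + j := ⟨n - 1, by omega⟩
    linarith [hgrow j 1 (by omega) le_rfl, show r 1 / 2 * 2 ^ (1 + j) = 2 ^ j * r 1 by ring]
  obtain ⟨N, hN⟩ := eventually_atTop.1
    (hbound.and ((tendsto_pole_bound (C := C) htend hlin).eventually_lt_const hε))
  refine ⟨N, fun n hn z hz_inner hz_outer ↦ ?_⟩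
  obtain ⟨hbound_n, hsmall⟩ := hN n hn
  obtain ⟨hsum, hle⟩ := hbound_n z hz_inner hz_outer
  calc ‖∑' k, 1 / (z - (r (k + 1) : ℂ))‖ ≤ ∑' k, 1 / ‖z - (r (k + 1) : ℂ)‖ := by
        simpa only [norm_div, norm_one] using
          norm_tsum_le_tsum_norm (f := fun k ↦ 1 / (z - (r (k + 1) : ℂ)))
            (by simpa only [norm_div, norm_one] using hsum)
    _ < ε := hle.trans_lt hsmall
end

section
/- Let P and Q be polynomials over ℂ with P(z) - Q(z) = A z^m + o(|z|^m) as |z| → ∞, where A ≠ 0 and m ≥ 1, and let (a_k) be a sequence of nonzero complex numbers with P(a_k) - Q(a_k) = (2k+1)πi and |a_k| → ∞. Then there exist constants 0 < c₁ < c₂ and k₀ such that c₁ k^{1/m} < |a_k| < c₂ k^{1/m} for all k > k₀; consequently ∑_k 1/|a_k|^λ converges if λ > m and diverges if λ ≤ m. -/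
open Filter Polynomial

/-!
Taking norms in `P(a_k) - Q(a_k) = (2k+1)πi` and using `P - Q ~ A z^m` gives
`(2k+1)π / |a_k|^m → |A|`, so `|a_k| / k^(1/m)` tends to the positive limit `(2π/|A|)^(1/m)`.
The two-sided bound and the comparison of `∑ |a_k|^(-λ)` with the `p`-series `∑ k^(-λ/m)`
both follow from this limit alone.
-/

open Topology Asymptotics

lemma tendsto_norm_div_norm_pow_of_tendsto_norm_sub_mul_pow {𝕜 : Type*} [NormedDivisionRing 𝕜]
    {g : 𝕜 → 𝕜} {A : 𝕜} {m : ℕ}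
    (h : Tendsto (fun z => ‖g z - A * z ^ m‖ / ‖z‖ ^ m) (comap norm atTop) (𝓝 0)) :
    Tendsto (fun z => ‖g z‖ / ‖z‖ ^ m) (comap norm atTop) (𝓝 ‖A‖) := by
  rw [tendsto_iff_norm_sub_tendsto_zero]
  refine squeeze_zero' (.of_forall fun _ => norm_nonneg _) ?_ h
  filter_upwards [tendsto_comap.eventually (eventually_gt_atTop 0)] with z hz
  have hzm : 0 < ‖z‖ ^ m := pow_pos hz m
  calc ‖‖g z‖ / ‖z‖ ^ m - ‖A‖‖ = |‖g z‖ - ‖A * z ^ m‖| / ‖z‖ ^ m := by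
        rw [Real.norm_eq_abs, norm_mul, norm_pow, div_sub' hzm.ne', abs_div, abs_of_pos hzm,
          mul_comm]
    _ ≤ ‖g z - A * z ^ m‖ / ‖z‖ ^ m := by gcongr; exact abs_norm_sub_norm_le _ _

lemma tendsto_two_mul_add_one_mul_div_natCast (c : ℝ) :
    Tendsto (fun k : ℕ => (2 * k + 1 : ℝ) * c / k) atTop (𝓝 (2 * c)) := by
  have h : Tendsto (fun k : ℕ => 2 * c + c / k) atTop (𝓝 (2 * c + 0)) :=
    tendsto_const_nhds.add (tendsto_const_div_atTop_nhds_zero_nat c)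
  rw [add_zero] at h
  refine h.congr' ?_
  filter_upwards [eventually_ne_atTop 0] with k hk
  field_simp

lemma tendsto_pow_div_natCast_of_tendsto_odd_mul_div_pow {f : ℕ → ℝ} {m : ℕ} {c α : ℝ}
    (hc : c ≠ 0) (hα : α ≠ 0)
    (h : Tendsto (fun k : ℕ => (2 * k + 1 : ℝ) * c / f k ^ m) atTop (𝓝 α)) :
    Tendsto (fun k : ℕ => f k ^ m / k) atTop (𝓝 (2 * c / α)) :=
  ((tendsto_two_mul_add_one_mul_div_natCast c).div h hα).congr fun k =>
    div_div_div_cancel_left' _ _ (mul_ne_zero (by positivity) hc)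

lemma tendsto_div_rpow_inv_of_tendsto_pow_div {ι : Type*} {l : Filter ι} {f x : ι → ℝ}
    {m : ℕ} {β : ℝ} (hm : m ≠ 0) (hf : ∀ i, 0 ≤ f i) (hx : ∀ i, 0 ≤ x i)
    (h : Tendsto (fun i => f i ^ m / x i) l (𝓝 β)) :
    Tendsto (fun i => f i / x i ^ (1 / (m : ℝ))) l (𝓝 (β ^ (1 / (m : ℝ)))) :=
  (h.rpow_const (Or.inr (by positivity))).congr fun i => by
    rw [Real.div_rpow (pow_nonneg (hf i) m) (hx i), one_div, Real.pow_rpow_inv_natCast (hf i) hm]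

lemma exists_bounds_of_tendsto_div {u v : ℕ → ℝ} {L : ℝ} (hL : 0 < L)
    (hv : ∀ᶠ k in atTop, 0 < v k) (h : Tendsto (fun k => u k / v k) atTop (𝓝 L)) :
    ∃ c₁ c₂ : ℝ, 0 < c₁ ∧ c₁ < c₂ ∧
      ∃ k₀ : ℕ, ∀ k, k₀ < k → c₁ * v k < u k ∧ u k < c₂ * v k := by
  have hmem : ∀ᶠ k in atTop, u k / v k ∈ Set.Ioo (L / 2) (2 * L) :=
    h.eventually (Ioo_mem_nhds (by linarith) (by linarith))
  obtain ⟨k₀, hk₀⟩ := (hmem.and hv).exists_forall_of_atTop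
  refine ⟨L / 2, 2 * L, by positivity, by linarith, k₀, fun k hk => ?_⟩
  obtain ⟨⟨hlo, hhi⟩, hvk⟩ := hk₀ k hk.le
  exact ⟨(lt_div_iff₀ hvk).mp hlo, (div_lt_iff₀ hvk).mp hhi⟩

lemma summable_one_div_rpow_iff_of_tendsto_div_rpow {f : ℕ → ℝ} {s L : ℝ} (hs : 0 < s)
    (hL : 0 < L) (hf : ∀ k, 0 ≤ f k)
    (h : Tendsto (fun k => f k / (k : ℝ) ^ (1 / s)) atTop (𝓝 L)) (lam : ℝ) :
    Summable (fun k => 1 / f k ^ lam) ↔ s < lam := by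
  have hratio : Tendsto (fun k : ℕ => (1 / f k ^ lam) / (k : ℝ) ^ (-lam / s)) atTop
      (𝓝 (L ^ (-lam))) :=
    (h.rpow_const (Or.inl hL.ne')).congr fun k => by
      have hk := Nat.cast_nonneg (α := ℝ) k
      rw [Real.div_rpow (hf k) (Real.rpow_nonneg hk _), ← Real.rpow_mul hk, Real.rpow_neg (hf k),
        one_div, inv_mul_eq_div, one_div]
  rw [(isTheta_of_div_tendsto_nhds_ne_zero hratio (by positivity)).summable_iff_nat.symm,
    Real.summable_nat_rpow, div_lt_iff₀ hs]
  constructor <;> intro <;> linarith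

theorem zeros_of_exp_sum_asymptotics_general (P Q : Polynomial ℂ) (A : ℂ) (m : ℕ) (a : ℕ → ℂ)
    (hA : A ≠ 0) (hm : 1 ≤ m)
    (hasymp : Tendsto
      (fun z : ℂ => ‖P.eval z - Q.eval z - A * z ^ m‖ / ‖z‖ ^ m)
      (Filter.comap (fun z : ℂ => ‖z‖) Filter.atTop) (nhds 0))
    (ha : ∀ k : ℕ, P.eval (a k) - Q.eval (a k) = ((2 * k + 1 : ℝ) * Real.pi) * Complex.I)
    (habs : Tendsto (fun k => ‖a k‖) atTop atTop) :
    (∃ c₁ c₂ : ℝ, 0 < c₁ ∧ c₁ < c₂ ∧ ∃ k₀ : ℕ, ∀ k, k₀ < k →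
      c₁ * (k : ℝ) ^ (1 / (m : ℝ)) < ‖a k‖ ∧
      ‖a k‖ < c₂ * (k : ℝ) ^ (1 / (m : ℝ))) ∧
    (∀ lam : ℝ, Summable (fun k : ℕ => 1 / ‖a k‖ ^ lam) ↔ (m : ℝ) < lam) := by
  have hnorm (k : ℕ) : ‖P.eval (a k) - Q.eval (a k)‖ = (2 * k + 1 : ℝ) * Real.pi := by
    rw [ha, norm_mul, Complex.norm_I, mul_one, ← Complex.ofReal_mul, Complex.norm_real,
      Real.norm_of_nonneg (by positivity)]
  have hpow : Tendsto (fun k : ℕ => (2 * k + 1 : ℝ) * Real.pi / ‖a k‖ ^ m) atTop (𝓝 ‖A‖) := by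
    simpa only [Function.comp_def, hnorm] using
      (tendsto_norm_div_norm_pow_of_tendsto_norm_sub_mul_pow hasymp).comp
        (tendsto_comap_iff.mpr habs)
  have hpow_div : Tendsto (fun k : ℕ => ‖a k‖ ^ m / k) atTop (𝓝 (2 * Real.pi / ‖A‖)) :=
    tendsto_pow_div_natCast_of_tendsto_odd_mul_div_pow Real.pi_ne_zero (norm_ne_zero_iff.mpr hA)
      hpow
  have hratio : Tendsto (fun k : ℕ => ‖a k‖ / (k : ℝ) ^ (1 / (m : ℝ))) atTop
      (𝓝 ((2 * Real.pi / ‖A‖) ^ (1 / (m : ℝ)))) :=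
    tendsto_div_rpow_inv_of_tendsto_pow_div (Nat.one_le_iff_ne_zero.mp hm)
      (fun _ => norm_nonneg _) (fun _ => Nat.cast_nonneg _) hpow_div
  have hL : 0 < (2 * Real.pi / ‖A‖) ^ (1 / (m : ℝ)) := by positivity
  refine ⟨exists_bounds_of_tendsto_div hL ?_ hratio,
    summable_one_div_rpow_iff_of_tendsto_div_rpow (Nat.cast_pos.mpr hm) hL
      (fun _ => norm_nonneg _) ?_⟩
  · filter_upwards [eventually_gt_atTop 0] with k hk
    positivity
  · simpa only [one_div_one_div] using hratio

theorem zeros_of_exp_sum_asymptotics (P Q : Polynomial ℂ) (A : ℂ) (m : ℕ) (a : ℕ → ℂ)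
    (hA : A ≠ 0) (hm : 1 ≤ m)
    (hasymp : Tendsto
      (fun z : ℂ => ‖P.eval z - Q.eval z - A * z ^ m‖ / ‖z‖ ^ m)
      (Filter.comap (fun z : ℂ => ‖z‖) Filter.atTop) (nhds 0))
    (hanz : ∀ k, a k ≠ 0)
    (ha : ∀ k : ℕ, P.eval (a k) - Q.eval (a k) = ((2 * k + 1 : ℝ) * Real.pi) * Complex.I)
    (habs : Tendsto (fun k => ‖a k‖) atTop atTop) :
    (∃ c₁ c₂ : ℝ, 0 < c₁ ∧ c₁ < c₂ ∧ ∃ k₀ : ℕ, ∀ k, k₀ < k →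
      c₁ * (k : ℝ) ^ (1 / (m : ℝ)) < ‖a k‖ ∧
      ‖a k‖ < c₂ * (k : ℝ) ^ (1 / (m : ℝ))) ∧
    (∀ lam : ℝ, Summable (fun k : ℕ => 1 / ‖a k‖ ^ lam) ↔ (m : ℝ) < lam) :=
  zeros_of_exp_sum_asymptotics_general P Q A m a hA hm hasymp ha habs
end
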